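/- arXiv:1302.0432 — 3 statements merged into one kernel-verified Lean document; each statement's English description precedes it below -/
import Mathlib

section
/- If B is a Hermitian positive definite n×n complex matrix, then there exists an invertible n×n matrix X and a real diagonal matrix Λ such that X*BX = I and AX = BXΛ, for any Hermitian n×n matrix A; moreover B⁻¹A = XΛX⁻¹. -/
/-!
Take `X₀ = B^{-1/2}`, so that `X₀ᴴ B X₀ = 1`, and diagonalize the Hermitian matrix `X₀ᴴ A X₀` by a
unitary `U`. Then `X = X₀ U` is `B`-orthonormal and congruence by `X` turns `A` into a real diagonal
matrix `Λ`. For any `B`-orthonormal `X` the matrix `Xᴴ B` is the inverse of `X`, which turns the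
congruence `Xᴴ A X = Λ` into the similarity relations `A X = B X Λ` and `B⁻¹ A = X Λ X⁻¹`.
-/

open Matrix
open scoped ComplexOrder

namespace Matrix

section Orthonormal

variable {n R : Type*} [Fintype n] [DecidableEq n] [CommRing R] [Star R]
  {B X : Matrix n n R}

theorem mul_conjTranspose_mul_eq_one_of_conjTranspose_mul_mul_eq_one (h : Xᴴ * B * X = 1) :
    X * (Xᴴ * B) = 1 :=
  mul_eq_one_comm.mp h

theorem mul_mul_conjTranspose_eq_one_of_conjTranspose_mul_mul_eq_one (h : Xᴴ * B * X = 1) :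
    B * X * Xᴴ = 1 :=
  mul_eq_one_comm.mp (by rwa [← mul_assoc])

theorem isUnit_of_conjTranspose_mul_mul_eq_one (h : Xᴴ * B * X = 1) : IsUnit X :=
  IsUnit.of_mul_eq_one _ (mul_conjTranspose_mul_eq_one_of_conjTranspose_mul_mul_eq_one h)

theorem inv_eq_conjTranspose_mul_of_conjTranspose_mul_mul_eq_one (h : Xᴴ * B * X = 1) :
    X⁻¹ = Xᴴ * B :=
  inv_eq_left_inv h

theorem inv_eq_mul_conjTranspose_of_conjTranspose_mul_mul_eq_one (h : Xᴴ * B * X = 1) :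
    B⁻¹ = X * Xᴴ :=
  inv_eq_right_inv (by
    rw [← mul_assoc]; exact mul_mul_conjTranspose_eq_one_of_conjTranspose_mul_mul_eq_one h)

theorem mul_eq_mul_mul_conjTranspose_mul_mul_of_conjTranspose_mul_mul_eq_one
    (h : Xᴴ * B * X = 1) (A : Matrix n n R) : A * X = B * X * (Xᴴ * A * X) := by
  simp only [← mul_assoc, mul_mul_conjTranspose_eq_one_of_conjTranspose_mul_mul_eq_one h, one_mul]

theorem inv_mul_eq_mul_conjTranspose_mul_mul_mul_inv_of_conjTranspose_mul_mul_eq_one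
    (h : Xᴴ * B * X = 1) (A : Matrix n n R) : B⁻¹ * A = X * (Xᴴ * A * X) * X⁻¹ := by
  rw [inv_eq_conjTranspose_mul_of_conjTranspose_mul_mul_eq_one h,
    inv_eq_mul_conjTranspose_of_conjTranspose_mul_mul_eq_one h]
  calc X * Xᴴ * A = X * Xᴴ * A * (X * (Xᴴ * B)) := by
        rw [mul_conjTranspose_mul_eq_one_of_conjTranspose_mul_mul_eq_one h, mul_one]
    _ = X * (Xᴴ * A * X) * (Xᴴ * B) := by simp only [mul_assoc]

end Orthonormal

variable {n 𝕜 : Type*} [Fintype n] [DecidableEq n] [RCLike 𝕜] {A B : Matrix n n 𝕜}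

open scoped MatrixOrder in
theorem PosDef.exists_conjTranspose_mul_mul_eq_one (hB : B.PosDef) :
    ∃ X : Matrix n n 𝕜, Xᴴ * B * X = 1 := by
  set S := CFC.sqrt B
  have hS : Sᴴ = S := (CFC.sqrt_nonneg B).posSemidef.1.eq
  have hSS : S * S = B := CFC.sqrt_mul_sqrt_self B hB.posSemidef.nonneg
  have hSdet : IsUnit S.det :=
    (isUnit_iff_isUnit_det S).mp <| (CFC.isUnit_sqrt_iff B hB.posSemidef.nonneg).mpr hB.isUnit
  refine ⟨S⁻¹, ?_⟩
  rw [conjTranspose_nonsing_inv, hS, ← hSS, ← mul_assoc, nonsing_inv_mul _ hSdet, one_mul,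
    mul_nonsing_inv _ hSdet]

theorem IsHermitian.exists_conjTranspose_mul_mul_eq_one_and_eq_diagonal (hA : A.IsHermitian)
    (hB : B.PosDef) :
    ∃ (X : Matrix n n 𝕜) (d : n → ℝ),
      Xᴴ * B * X = 1 ∧ Xᴴ * A * X = diagonal (fun i => (d i : 𝕜)) := by
  obtain ⟨X₀, hX₀⟩ := hB.exists_conjTranspose_mul_mul_eq_one
  have hM : (X₀ᴴ * A * X₀).IsHermitian := isHermitian_conjTranspose_mul_mul X₀ hA
  set U : Matrix n n 𝕜 := ↑hM.eigenvectorUnitary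
  have hU : star U * U = 1 := Unitary.coe_star_mul_self _
  have hdiag := hM.conjStarAlgAut_star_eigenvectorUnitary
  rw [Unitary.conjStarAlgAut_star_apply] at hdiag
  refine ⟨X₀ * U, hM.eigenvalues, ?_, ?_⟩
  · rw [conjTranspose_mul, ← star_eq_conjTranspose]
    calc star U * X₀ᴴ * B * (X₀ * U) = star U * (X₀ᴴ * B * X₀) * U := by simp only [mul_assoc]
      _ = 1 := by rw [hX₀, mul_one, hU]
  · rw [conjTranspose_mul, ← star_eq_conjTranspose]
    calc star U * X₀ᴴ * A * (X₀ * U) = star U * (X₀ᴴ * A * X₀) * U := by simp only [mul_assoc]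
      _ = _ := hdiag

end Matrix

/-- Simultaneous diagonalization of a Hermitian pencil (A, B) with B positive
definite: there exist an invertible `X` and real diagonal `Λ` with
`Xᴴ B X = 1`, `A X = B X Λ`, and `B⁻¹ A = X Λ X⁻¹`. -/
theorem stmt0 (n : ℕ) (A B : Matrix (Fin n) (Fin n) ℂ)
    (hA : A.IsHermitian) (hB : B.PosDef) :
    ∃ (X : Matrix (Fin n) (Fin n) ℂ) (d : Fin n → ℝ),
      IsUnit X ∧
      Xᴴ * B * X = 1 ∧
      A * X = B * X * Matrix.diagonal (fun i => (d i : ℂ)) ∧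
      B⁻¹ * A = X * Matrix.diagonal (fun i => (d i : ℂ)) * X⁻¹ := by
  obtain ⟨X, d, hXB, hXA⟩ := hA.exists_conjTranspose_mul_mul_eq_one_and_eq_diagonal hB
  -- `RCLike.ofReal` at `ℂ` is `Complex.ofReal` only up to unfolding, which `rw` does not see.
  replace hXA : Xᴴ * A * X = diagonal (fun i => (d i : ℂ)) := hXA
  refine ⟨X, d, isUnit_of_conjTranspose_mul_mul_eq_one hXB, hXB, ?_, ?_⟩
  · rw [← hXA]
    exact mul_eq_mul_mul_conjTranspose_mul_mul_of_conjTranspose_mul_mul_eq_one hXB A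
  · rw [← hXA]
    exact inv_mul_eq_mul_conjTranspose_mul_mul_mul_inv_of_conjTranspose_mul_mul_eq_one hXB A
end

section
/- Let B = C*C be Hermitian positive definite (C invertible), and let X_t (n×m) and X_b (n×(n−m)) have B-orthonormal columns with X_t* B X_b = 0. Suppose Q = [ (X_t + X_b G)L⁻¹ V ] U is B-orthonormal (Q*BQ = I_p), where ‖G‖ = ε ≤ 1/2, U is p×p unitary, and L⁻¹ = (I_m + G*G)^{−1/2}. Write V = X_t S + X_b T where S = X_t*BV, T = X_b*BV. Then (a) ‖L⁻¹ − I_m‖ ≤ ε²; (b) ‖S‖ ≤ ε; (c) T*T = I_{p−m} − S*S, and R := (T*T)^{1/2} satisfies ‖R − I_{p−m}‖ ≤ ε², and H := T R⁻¹ satisfies H*H = I_{p−m}. -/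
open Matrix
open scoped ComplexOrder Matrix.Norms.L2Operator

/-!
With `S = X_tᴴBV` and `T = X_bᴴBV`, the `B`-orthonormality of `V = X_t S + X_b T` reads
`SᴴS + TᴴT = 1`, and its `B`-orthogonality to `(X_t + X_b G)L⁻¹` reads `S = -GᴴT`; hence
`‖T‖ ≤ 1` and `‖S‖ ≤ ‖G‖`. Both `L⁻¹` and `R` are positive square roots of matrices `1 - DᴴD`
(with `D = GL⁻¹`, resp. `D = S`), and for `a ≥ 0` in a C⋆-algebra the spectral inequality
`|1 - x| ≤ |1 - x²|` on `[0, ∞)` gives `‖1 - a‖ ≤ ‖1 - a²‖ = ‖D‖²`. Since `ε < 1`, `R` is then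
within distance `< 1` of the identity, hence invertible.
-/

theorem norm_one_sub_le_norm_one_sub_mul_self {A : Type*} [CStarAlgebra A] [PartialOrder A]
    [StarOrderedRing A] {a : A} (ha : 0 ≤ a) : ‖1 - a‖ ≤ ‖1 - a * a‖ := by
  have h1 : 1 - a = cfc (fun x : ℝ ↦ 1 - x) a := by
    rw [cfc_sub .., cfc_const_one .., cfc_id' ..]
  have h2 : 1 - a * a = cfc (fun x : ℝ ↦ 1 - x * x) a := by
    rw [cfc_sub .., cfc_const_one .., cfc_mul .., cfc_id' ..]
  rw [h1, h2]
  refine norm_cfc_le (norm_nonneg _) fun x hx ↦ le_trans ?_ (norm_apply_le_norm_cfc _ a hx)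
  have hx0 : 0 ≤ x := spectrum_nonneg_of_nonneg ha hx
  rw [Real.norm_eq_abs, Real.norm_eq_abs, show 1 - x * x = (1 - x) * (1 + x) by ring, abs_mul]
  exact le_mul_of_one_le_right (abs_nonneg _) (by rw [abs_of_nonneg (by linarith)]; linarith)

namespace Matrix

theorem gram_mul_add_mul {α : Type*} [Semiring α] [StarRing α] {n p q r : Type*} [Fintype n]
    [Fintype p] [Fintype q] [DecidableEq p] [DecidableEq q] {B : Matrix n n α}
    (hB : B.IsHermitian) {Xt : Matrix n p α} {Xb : Matrix n q α} (hXt : Xtᴴ * B * Xt = 1)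
    (hXb : Xbᴴ * B * Xb = 1) (hXtb : Xtᴴ * B * Xb = 0) (S : Matrix p r α) (T : Matrix q r α) :
    (Xt * S + Xb * T)ᴴ * B * (Xt * S + Xb * T) = Sᴴ * S + Tᴴ * T := by
  have hXbt : Xbᴴ * B * Xt = 0 := by
    simpa [conjTranspose_mul, hB.eq, Matrix.mul_assoc] using congr_arg conjTranspose hXtb
  calc (Xt * S + Xb * T)ᴴ * B * (Xt * S + Xb * T)
      = Sᴴ * (Xtᴴ * B * Xt) * S + Sᴴ * (Xtᴴ * B * Xb) * T + Tᴴ * (Xbᴴ * B * Xt) * S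
          + Tᴴ * (Xbᴴ * B * Xb) * T := by
        simp only [conjTranspose_add, conjTranspose_mul, Matrix.add_mul, Matrix.mul_add,
          Matrix.mul_assoc]
        abel
    _ = Sᴴ * S + Tᴴ * T := by simp [hXt, hXb, hXtb, hXbt]

theorem conjTranspose_mul_inv_mul_mul_inv {α : Type*} [CommRing α] [StarRing α] {m n : Type*}
    [Fintype m] [Fintype n] [DecidableEq n] {T : Matrix m n α} {R : Matrix n n α}
    (hR : R.IsHermitian) (hRu : IsUnit R) (hRR : R * R = Tᴴ * T) :
    (T * R⁻¹)ᴴ * (T * R⁻¹) = 1 := by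
  have hRdet : IsUnit R.det := (isUnit_iff_isUnit_det R).mp hRu
  calc (T * R⁻¹)ᴴ * (T * R⁻¹) = R⁻¹ * (Tᴴ * T) * R⁻¹ := by
        rw [conjTranspose_mul, conjTranspose_nonsing_inv, hR.eq, Matrix.mul_assoc,
          Matrix.mul_assoc, Matrix.mul_assoc]
    _ = (R⁻¹ * R) * (R * R⁻¹) := by rw [← hRR]; simp only [Matrix.mul_assoc]
    _ = 1 := by rw [nonsing_inv_mul _ hRdet, mul_nonsing_inv _ hRdet, Matrix.one_mul]

variable {m n k : Type*} [Fintype m] [Fintype n] [Fintype k] [DecidableEq n]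

theorem l2_opNorm_le_one_of_conjTranspose_mul_self_add {A : Matrix m n ℂ} {D : Matrix k n ℂ}
    (h : Aᴴ * A + Dᴴ * D = 1) : ‖A‖ ≤ 1 := by
  open scoped MatrixOrder in
  have hAA : ‖Aᴴ * A‖ ≤ 1 := by
    rw [CStarAlgebra.norm_le_one_iff_of_nonneg _ (posSemidef_conjTranspose_mul_self A).nonneg,
      ← h, Matrix.le_iff, add_sub_cancel_left]
    exact posSemidef_conjTranspose_mul_self D
  rw [l2_opNorm_conjTranspose_mul_self] at hAA
  nlinarith [norm_nonneg A]

theorem PosSemidef.l2_opNorm_sub_one_le {A : Matrix n n ℂ} (hA : A.PosSemidef) {D : Matrix k n ℂ}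
    (h : A * A + Dᴴ * D = 1) : ‖A - 1‖ ≤ ‖D‖ ^ 2 := by
  open scoped MatrixOrder in
  calc ‖A - 1‖ = ‖1 - A‖ := norm_sub_rev _ _
    _ ≤ ‖1 - A * A‖ := norm_one_sub_le_norm_one_sub_mul_self hA.nonneg
    _ = ‖D‖ ^ 2 := by rw [← h, add_sub_cancel_left, l2_opNorm_conjTranspose_mul_self, sq]

theorem PosSemidef.l2_opNorm_sub_one_le_of_mul_one_add_mul {L : Matrix n n ℂ} (hL : L.PosSemidef)
    {G : Matrix k n ℂ} (hLG : L * (1 + Gᴴ * G) * L = 1) : ‖L - 1‖ ≤ ‖G‖ ^ 2 := by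
  have hLH : Lᴴ = L := hL.isHermitian.eq
  have hGram : L * L + (G * L)ᴴ * (G * L) = 1 := by
    rw [← hLG, conjTranspose_mul, hLH]
    simp only [Matrix.mul_add, Matrix.add_mul, Matrix.mul_one, Matrix.mul_assoc]
  have hLnorm : ‖L‖ ≤ 1 :=
    l2_opNorm_le_one_of_conjTranspose_mul_self_add (D := G * L) (hLH.symm ▸ hGram)
  refine (hL.l2_opNorm_sub_one_le hGram).trans (pow_le_pow_left₀ (norm_nonneg _) ?_ 2)
  exact (l2_opNorm_mul _ _).trans (mul_le_of_le_one_right (norm_nonneg _) hLnorm)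

end Matrix

theorem stmt16_general (n m b r : ℕ)
    (C B : Matrix (Fin n) (Fin n) ℂ) (hB : B = Cᴴ * C)
    (Xt : Matrix (Fin n) (Fin m) ℂ) (Xb : Matrix (Fin n) (Fin b) ℂ)
    (hXt : Xtᴴ * B * Xt = 1) (hXb : Xbᴴ * B * Xb = 1) (hXtb : Xtᴴ * B * Xb = 0)
    (G : Matrix (Fin b) (Fin m) ℂ) (ε : ℝ) (hε : ‖G‖ = ε) (hε2 : ε ≤ 1 / 2)
    (Linv : Matrix (Fin m) (Fin m) ℂ)
    (hLpsd : Linv.PosSemidef) (hLinv : Linv * (1 + Gᴴ * G) * Linv = 1)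
    (V : Matrix (Fin n) (Fin r) ℂ)
    (hVBV : Vᴴ * B * V = 1)
    (horth : ((Xt + Xb * G) * Linv)ᴴ * B * V = 0)
    (hspan : V = Xt * (Xtᴴ * B * V) + Xb * (Xbᴴ * B * V)) :
    ‖Linv - 1‖ ≤ ε ^ 2 ∧
    ‖Xtᴴ * B * V‖ ≤ ε ∧
    (Xbᴴ * B * V)ᴴ * (Xbᴴ * B * V) = 1 - (Xtᴴ * B * V)ᴴ * (Xtᴴ * B * V) ∧
    ∃ R : Matrix (Fin r) (Fin r) ℂ,
      R.PosSemidef ∧ R * R = (Xbᴴ * B * V)ᴴ * (Xbᴴ * B * V) ∧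
      ‖R - 1‖ ≤ ε ^ 2 ∧ IsUnit R ∧
      ((Xbᴴ * B * V) * R⁻¹)ᴴ * ((Xbᴴ * B * V) * R⁻¹) = 1 := by
  set S := Xtᴴ * B * V
  set T := Xbᴴ * B * V
  have hST : Sᴴ * S + Tᴴ * T = 1 := by
    rw [← gram_mul_add_mul (hB ▸ isHermitian_conjTranspose_mul_self C) hXt hXb hXtb, ← hspan, hVBV]
  have hTT : Tᴴ * T = 1 - Sᴴ * S := eq_sub_of_add_eq' hST
  have hSGT : S = -(Gᴴ * T) := by
    have hL : Linv * (S + Gᴴ * T) = 0 := by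
      rw [← horth, conjTranspose_mul, hLpsd.isHermitian.eq]
      simp only [S, T, conjTranspose_add, conjTranspose_mul, Matrix.add_mul, Matrix.mul_add,
        Matrix.mul_assoc]
    rw [eq_neg_iff_add_eq_zero]
    calc S + Gᴴ * T = Linv * (1 + Gᴴ * G) * (Linv * (S + Gᴴ * T)) := by
          rw [← Matrix.mul_assoc (Linv * (1 + Gᴴ * G)), hLinv, Matrix.one_mul]
      _ = 0 := by rw [hL, Matrix.mul_zero]
  have hS : ‖S‖ ≤ ε := by
    rw [hSGT, norm_neg, ← mul_one ε, ← hε, ← l2_opNorm_conjTranspose G]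
    exact (l2_opNorm_mul _ _).trans (mul_le_mul_of_nonneg_left
      (l2_opNorm_le_one_of_conjTranspose_mul_self_add ((add_comm _ _).trans hST)) (norm_nonneg _))
  open scoped MatrixOrder in
  obtain ⟨R, hRpsd, hRR⟩ : ∃ R : Matrix (Fin r) (Fin r) ℂ, R.PosSemidef ∧ R * R = Tᴴ * T :=
    ⟨CFC.sqrt (Tᴴ * T), (CFC.sqrt_nonneg _).posSemidef,
      CFC.sqrt_mul_sqrt_self _ (posSemidef_conjTranspose_mul_self T).nonneg⟩
  have hR : ‖R - 1‖ ≤ ε ^ 2 :=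
    (hRpsd.l2_opNorm_sub_one_le (by rw [hRR, hTT, sub_add_cancel])).trans
      (pow_le_pow_left₀ (norm_nonneg _) hS 2)
  have hRunit : IsUnit R := by
    rw [← sub_sub_cancel 1 R]
    exact isUnit_one_sub_of_norm_lt_one (by rw [norm_sub_rev]; nlinarith [(norm_nonneg G).trans_eq hε])
  exact ⟨hε ▸ hLpsd.l2_opNorm_sub_one_le_of_mul_one_add_mul hLinv, hS, hTT, R, hRpsd, hRR, hR,
    hRunit, conjTranspose_mul_inv_mul_mul_inv hRpsd.isHermitian hRunit hRR⟩

/-- Structure of the `B`-orthonormal basis `Q = [ (X_t + X_b G)L⁻¹  V ] U`: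
bounds on `L⁻¹ − I`, on `S = X_tᴴBV`, the identity `TᴴT = I − SᴴS` for
`T = X_bᴴBV`, and the polar-type factors `R = (TᴴT)^{1/2}`, `H = TR⁻¹` with
`HᴴH = I`. -/
theorem stmt16 (n m b r : ℕ)
    (C B : Matrix (Fin n) (Fin n) ℂ) (hC : IsUnit C) (hB : B = Cᴴ * C)
    (Xt : Matrix (Fin n) (Fin m) ℂ) (Xb : Matrix (Fin n) (Fin b) ℂ)
    (hXt : Xtᴴ * B * Xt = 1) (hXb : Xbᴴ * B * Xb = 1) (hXtb : Xtᴴ * B * Xb = 0)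
    (G : Matrix (Fin b) (Fin m) ℂ) (ε : ℝ) (hε : ‖G‖ = ε) (hε2 : ε ≤ 1 / 2)
    (Linv : Matrix (Fin m) (Fin m) ℂ)
    (hLpsd : Linv.PosSemidef) (hLinv : Linv * (1 + Gᴴ * G) * Linv = 1)
    (V : Matrix (Fin n) (Fin r) ℂ)
    (hVBV : Vᴴ * B * V = 1)
    (horth : ((Xt + Xb * G) * Linv)ᴴ * B * V = 0)
    (hspan : V = Xt * (Xtᴴ * B * V) + Xb * (Xbᴴ * B * V)) :
    ‖Linv - 1‖ ≤ ε ^ 2 ∧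
    ‖Xtᴴ * B * V‖ ≤ ε ∧
    (Xbᴴ * B * V)ᴴ * (Xbᴴ * B * V) = 1 - (Xtᴴ * B * V)ᴴ * (Xtᴴ * B * V) ∧
    ∃ R : Matrix (Fin r) (Fin r) ℂ,
      R.PosSemidef ∧ R * R = (Xbᴴ * B * V)ᴴ * (Xbᴴ * B * V) ∧
      ‖R - 1‖ ≤ ε ^ 2 ∧ IsUnit R ∧
      ((Xbᴴ * B * V) * R⁻¹)ᴴ * ((Xbᴴ * B * V) * R⁻¹) = 1 :=
  stmt16_general n m b r C B hB Xt Xb hXt hXb hXtb G ε hε hε2 Linv hLpsd hLinv V hVBV horth hspan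
end

section
/- Let W, Δ_off, Δ_diag be p×p Hermitian matrices, where W = blkdiag(Λ_m, N) with Λ_m = diag(λ_1,…,λ_m) and N Hermitian of size (p−m), Δ_off strictly block-off-diagonal (zero diagonal blocks) and Δ_diag block-diagonal. Let η·‖Λ‖ := min{|λ − μ| : λ ∈ eig(Λ_m), μ ∈ eig(N)} > 0. Then there exist m eigenvalues λ̂_1,…,λ̂_m of W + Δ_off + Δ_diag with |λ_j − λ̂_j| ≤ min{‖Δ_off‖, ‖Δ_off‖²/(η‖Λ‖)} + ‖Δ_diag‖ for each j = 1,…,m. -/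
/-!
Put `γ = η‖Λ‖`, `ρ = min ‖Δoff‖ (‖Δoff‖² / γ)` and `β = ρ + ‖Δdiag‖`. Since `‖Δoff‖² ≤ ρ (ρ + γ)`,
AM–GM bounds the quadratic form of `Δoff + Δdiag` at `z = (x, y)`, in absolute value, by that of
`Sh = diag(β, β + γ)`; hence `W - Sh ≤ W + Δoff + Δdiag ≤ W + Sh` as quadratic forms. The two
comparison matrices are block diagonal with eigenvalues `λᵢ ± β` and `νⱼ ± (β + γ)`, and the
Courant–Fischer principle turns the sandwich into inequalities between eigenvalue counts. Given
some `λᵢ ∈ [a, c]`, the gap puts every `νⱼ` below `c - γ` or above `a + γ`, so adding the counts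
of eigenvalues `≤ c + β` and `≥ a - β` shows that `[a - β, c + β]` contains at least as many
eigenvalues of `W + Δoff + Δdiag` as there are `λᵢ` in `[a, c]`. Hall's marriage theorem turns
these counts into the matching.
-/

open Finset Function Matrix Module RCLike WithLp
open scoped InnerProductSpace Matrix.Norms.L2Operator

theorem two_mul_mul_mul_le_of_sq_le {b ρ s x y : ℝ} (hρ : 0 ≤ ρ) (hs : 0 ≤ s)
    (h : b ^ 2 ≤ ρ * s) : 2 * b * x * y ≤ ρ * x ^ 2 + s * y ^ 2 := by
  rcases hρ.eq_or_lt with rfl | hρ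
  · obtain rfl : b = 0 := by nlinarith
    nlinarith
  · have : 0 ≤ ρ * (ρ * x ^ 2 + s * y ^ 2 - 2 * b * x * y) := by
      nlinarith [sq_nonneg (ρ * x - b * y), mul_nonneg (sub_nonneg.2 h) (sq_nonneg y)]
    nlinarith [(mul_nonneg_iff_of_pos_left hρ).1 this]

theorem sq_le_min_mul_min_add {b γ : ℝ} (hb : 0 ≤ b) (hγ : 0 < γ) :
    b ^ 2 ≤ min b (b ^ 2 / γ) * (min b (b ^ 2 / γ) + γ) := by
  rcases min_choice b (b ^ 2 / γ) with h | h <;> rw [h]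
  · nlinarith
  · have : b ^ 2 / γ * γ = b ^ 2 := div_mul_cancel₀ _ hγ.ne'
    nlinarith [sq_nonneg (b ^ 2 / γ)]

section SpectralCounting

variable {𝕜 E ι κ : Type*} [RCLike 𝕜] [NormedAddCommGroup E] [InnerProductSpace 𝕜 E]
  [Fintype ι] [Fintype κ]

theorem OrthonormalBasis.re_inner_apply_self_eq_sum (u : OrthonormalBasis ι 𝕜 E)
    {T : E →L[𝕜] E} {p : ι → ℝ} (hT : ∀ k, T (u k) = (p k : 𝕜) • u k) (z : E) :
    re ⟪T z, z⟫_𝕜 = ∑ k, p k * ‖⟪u k, z⟫_𝕜‖ ^ 2 := by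
  conv_lhs => rw [← u.sum_repr' z]
  simp only [map_sum, map_smul, hT, smul_smul, sum_inner, inner_smul_left,
    u.orthonormal.inner_right_fintype]
  refine sum_congr rfl fun k _ => ?_
  rw [map_mul (starRingEnd 𝕜), conj_ofReal, mul_right_comm, RCLike.conj_mul, ← ofReal_pow,
    ← ofReal_mul, ofReal_re, mul_comm]

theorem OrthonormalBasis.re_inner_apply_self_le_mul_norm_sq (u : OrthonormalBasis ι 𝕜 E)
    {T : E →L[𝕜] E} {p : ι → ℝ} (hT : ∀ k, T (u k) = (p k : 𝕜) • u k) {x : ℝ} {z : E}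
    (hz : ∀ k, x < p k → ⟪u k, z⟫_𝕜 = 0) : re ⟪T z, z⟫_𝕜 ≤ x * ‖z‖ ^ 2 := by
  rw [u.re_inner_apply_self_eq_sum hT, ← u.sum_sq_norm_inner_right, mul_sum]
  refine sum_le_sum fun k _ => ?_
  rcases le_or_gt (p k) x with hk | hk
  · exact mul_le_mul_of_nonneg_right hk (by positivity)
  · simp [hz k hk]

theorem OrthonormalBasis.mul_norm_sq_lt_re_inner_apply_self (u : OrthonormalBasis ι 𝕜 E)
    {T : E →L[𝕜] E} {p : ι → ℝ} (hT : ∀ k, T (u k) = (p k : 𝕜) • u k) {x : ℝ} {z : E}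
    (hz : ∀ k, p k ≤ x → ⟪u k, z⟫_𝕜 = 0) (hz₀ : z ≠ 0) : x * ‖z‖ ^ 2 < re ⟪T z, z⟫_𝕜 := by
  obtain ⟨k₀, hk₀⟩ : ∃ k, ⟪u k, z⟫_𝕜 ≠ 0 := by
    by_contra! h
    exact hz₀ (by simpa [h] using (u.sum_repr' z).symm)
  have hk₀x : x < p k₀ := by
    by_contra! h
    exact hk₀ (hz k₀ h)
  rw [u.re_inner_apply_self_eq_sum hT, ← u.sum_sq_norm_inner_right, mul_sum]
  refine sum_lt_sum (fun k _ => ?_) ⟨k₀, mem_univ _, ?_⟩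
  · rcases le_or_gt (p k) x with hk | hk
    · simp [hz k hk]
    · exact mul_le_mul_of_nonneg_right hk.le (by positivity)
  · exact mul_lt_mul_of_pos_right hk₀x (by positivity)

theorem OrthonormalBasis.finrank_orthogonal_span_image_add_card (u : OrthonormalBasis ι 𝕜 E)
    (s : Finset ι) : finrank 𝕜 (Submodule.span 𝕜 (u '' s))ᗮ + #s = Fintype.card ι := by
  have := u.toBasis.finiteDimensional_of_finite
  have hli : LinearIndependent 𝕜 fun k : (s : Set ι) => u k :=
    u.orthonormal.linearIndependent.comp _ Subtype.val_injective
  have h := (Submodule.span 𝕜 (u '' s)).finrank_add_finrank_orthogonal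
  rw [Set.image_eq_range] at h ⊢
  rw [finrank_span_eq_card hli, finrank_eq_card_basis u.toBasis] at h
  simpa [add_comm] using h

/-- The Courant–Fischer min-max principle, in counting form. -/
theorem card_filter_le_le_of_re_inner_le {T T' : E →L[𝕜] E}
    (hTT' : ∀ z, re ⟪T z, z⟫_𝕜 ≤ re ⟪T' z, z⟫_𝕜)
    (u : OrthonormalBasis ι 𝕜 E) {p : ι → ℝ} (hu : ∀ k, T (u k) = (p k : 𝕜) • u k)
    (w : OrthonormalBasis κ 𝕜 E) {q : κ → ℝ} (hw : ∀ k, T' (w k) = (q k : 𝕜) • w k) (x : ℝ) :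
    #{k | q k ≤ x} ≤ #{k | p k ≤ x} := by
  have := u.toBasis.finiteDimensional_of_finite
  set V := (Submodule.span 𝕜 (w '' ↑({k | x < q k} : Finset κ)))ᗮ
  set U := (Submodule.span 𝕜 (u '' ↑({k | p k ≤ x} : Finset ι)))ᗮ
  have hVU : V ⊓ U = ⊥ := by
    refine (Submodule.eq_bot_iff _).2 fun z ⟨hzV, hzU⟩ => ?_
    by_contra hz₀
    have hV := w.re_inner_apply_self_le_mul_norm_sq hw (x := x) fun k hk =>
      Submodule.inner_right_of_mem_orthogonal
        (Submodule.subset_span (Set.mem_image_of_mem w (by simpa using hk))) hzV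
    have hU := u.mul_norm_sq_lt_re_inner_apply_self hu (x := x) (fun k hk =>
      Submodule.inner_right_of_mem_orthogonal
        (Submodule.subset_span (Set.mem_image_of_mem u (by simpa using hk))) hzU) hz₀
    linarith [hTT' z]
  have hsum := Submodule.finrank_sup_add_finrank_inf_eq V U
  rw [hVU, finrank_bot, add_zero] at hsum
  have hle := (V ⊔ U).finrank_le
  have hV : finrank 𝕜 V + _ = _ := w.finrank_orthogonal_span_image_add_card {k | x < q k}
  have hU : finrank 𝕜 U + _ = _ := u.finrank_orthogonal_span_image_add_card {k | p k ≤ x}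
  have hq := card_filter_add_card_filter_not (s := univ) (fun k => q k ≤ x)
  simp only [not_le, card_univ] at hq
  have hικ := (finrank_eq_card_basis u.toBasis).symm.trans (finrank_eq_card_basis w.toBasis)
  rw [finrank_eq_card_basis u.toBasis] at hle
  omega

theorem card_filter_ge_le_of_re_inner_le {T T' : E →L[𝕜] E}
    (hTT' : ∀ z, re ⟪T z, z⟫_𝕜 ≤ re ⟪T' z, z⟫_𝕜)
    (u : OrthonormalBasis ι 𝕜 E) {p : ι → ℝ} (hu : ∀ k, T (u k) = (p k : 𝕜) • u k)
    (w : OrthonormalBasis κ 𝕜 E) {q : κ → ℝ} (hw : ∀ k, T' (w k) = (q k : 𝕜) • w k) (x : ℝ) :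
    #{k | x ≤ p k} ≤ #{k | x ≤ q k} := by
  simpa using card_filter_le_le_of_re_inner_le (T := -T') (T' := -T)
    (fun z => by simpa using hTT' z) w (p := -q) (fun k => by simp [hw]) u (q := -p)
    (fun k => by simp [hu]) (-x)

end SpectralCounting

theorem disjoint_biUnion_abs_sub_le {ι κ : Type*} [Fintype κ] [DecidableEq κ] (l : ι → ℝ)
    (μ : κ → ℝ) {β x : ℝ} {C D : Finset ι} (hC : ∀ j ∈ C, l j + β < x)
    (hD : ∀ j ∈ D, x < l j - β) :
    Disjoint (C.biUnion fun i => {k | |l i - μ k| ≤ β})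
      (D.biUnion fun i => {k | |l i - μ k| ≤ β}) := by
  refine disjoint_left.2 fun k hkC hkD => ?_
  obtain ⟨c, hc, hck⟩ := mem_biUnion.1 hkC
  obtain ⟨d, hd, hdk⟩ := mem_biUnion.1 hkD
  have h₁ := abs_le.1 (mem_filter.1 hck).2
  have h₂ := abs_le.1 (mem_filter.1 hdk).2
  linarith [hC c hc, hD d hd]

theorem card_le_card_biUnion_of_card_filter_Icc_le {ι κ : Type*} [Fintype ι] [Fintype κ]
    [DecidableEq κ] (l : ι → ℝ) (μ : κ → ℝ) (β : ℝ)
    (h : ∀ a c, #{i | l i ∈ Set.Icc a c} ≤ #{k | μ k ∈ Set.Icc (a - β) (c + β)})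
    (J : Finset ι) : #J ≤ #(J.biUnion fun i => {k | |l i - μ k| ≤ β}) := by
  classical
  set N : ι → Finset κ := fun i => {k | |l i - μ k| ≤ β}
  induction J using Finset.strongInduction with | H J ih => ?_
  rcases J.eq_empty_or_nonempty with rfl | hJ
  · simp
  obtain ⟨ja, hja, hmin⟩ := J.exists_min_image l hJ
  obtain ⟨jc, hjc, hmax⟩ := J.exists_max_image l hJ
  by_cases hcover : ∀ k, μ k ∈ Set.Icc (l ja - β) (l jc + β) → k ∈ J.biUnion N
  · calc #J ≤ #{i | l i ∈ Set.Icc (l ja) (l jc)} :=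
          card_le_card fun j hj => by simp [hmin j hj, hmax j hj]
      _ ≤ #{k | μ k ∈ Set.Icc (l ja - β) (l jc + β)} := h _ _
      _ ≤ #(J.biUnion N) := card_le_card fun k hk => hcover k (by simpa using hk)
  -- an uncovered value `μ k` in the hull splits `J` into two clusters with disjoint neighbourhoods
  push Not at hcover
  obtain ⟨k, ⟨hk₁, hk₂⟩, hkJ⟩ := hcover
  have hfar : ∀ j ∈ J, l j + β < μ k ∨ μ k < l j - β := fun j hj => by
    have : β < |l j - μ k| := by
      by_contra! hle
      exact hkJ (mem_biUnion.2 ⟨j, hj, by simpa [N] using hle⟩)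
    rcases lt_abs.1 this with h' | h'
    · right; linarith
    · left; linarith
  set C := J.filter fun j => l j + β < μ k
  set D := J.filter fun j => ¬ l j + β < μ k
  have hD : ∀ j ∈ D, μ k < l j - β := fun j hj =>
    (hfar j (mem_filter.1 hj).1).resolve_left (mem_filter.1 hj).2
  have hCJ : C ⊂ J := filter_ssubset.2 ⟨jc, hjc, not_lt.2 hk₂⟩
  have hDJ : D ⊂ J :=
    filter_ssubset.2 ⟨ja, hja, not_not.2 ((hfar ja hja).resolve_right (not_lt.2 hk₁))⟩
  have hdisj : Disjoint (C.biUnion N) (D.biUnion N) :=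
    disjoint_biUnion_abs_sub_le l μ (fun j hj => (mem_filter.1 hj).2) hD
  calc #J = #C + #D := (card_filter_add_card_filter_not _).symm
    _ ≤ #(C.biUnion N) + #(D.biUnion N) := add_le_add (ih C hCJ) (ih D hDJ)
    _ = #(J.biUnion N) := by
      rw [← card_union_of_disjoint hdisj, ← union_biUnion, filter_union_filter_not_eq]

theorem exists_injective_abs_sub_le_of_card_filter_Icc_le {ι κ : Type*} [Fintype ι] [Fintype κ]
    (l : ι → ℝ) (μ : κ → ℝ) (β : ℝ)
    (h : ∀ a c, #{i | l i ∈ Set.Icc a c} ≤ #{k | μ k ∈ Set.Icc (a - β) (c + β)}) :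
    ∃ g : ι → κ, Injective g ∧ ∀ i, |l i - μ (g i)| ≤ β := by
  classical
  obtain ⟨g, hg, hgN⟩ := (all_card_le_biUnion_card_iff_exists_injective _).1
    (card_le_card_biUnion_of_card_filter_Icc_le l μ β h)
  exact ⟨g, hg, fun i => by simpa using hgN i⟩

theorem Finset.card_filter_or_add_card_filter_and {α : Type*} (s : Finset α)
    (P Q : α → Prop) [DecidablePred P] [DecidablePred Q] :
    #(s.filter fun x => P x ∨ Q x) + #(s.filter fun x => P x ∧ Q x) =
      #(s.filter P) + #(s.filter Q) := by
  classical
  rw [filter_or, filter_and, card_union_add_card_inter]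

theorem Finset.card_filter_sum {α β : Type*} [Fintype α] [Fintype β] (P : α ⊕ β → Prop)
    [DecidablePred P] : #{k | P k} = #{i | P (.inl i)} + #{j | P (.inr j)} := by
  simp only [card_filter, Fintype.sum_sum_type]

theorem card_filter_Icc_le_of_card_filter_le {ι τ : Type*} [Fintype ι] [Fintype τ]
    (l : ι → ℝ) (ν : τ → ℝ) (μ : ι ⊕ τ → ℝ) {β γ : ℝ} (hgap : ∀ i j, γ ≤ |l i - ν j|)
    (hup : ∀ x, #{k | Sum.elim (l · + β) (ν · + (β + γ)) k ≤ x} ≤ #{k | μ k ≤ x})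
    (hdn : ∀ x, #{k | x ≤ Sum.elim (l · + -β) (ν · + -(β + γ)) k} ≤ #{k | x ≤ μ k})
    (a c : ℝ) : #{i | l i ∈ Set.Icc a c} ≤ #{k | μ k ∈ Set.Icc (a - β) (c + β)} := by
  by_cases hne : ∃ i₀, l i₀ ∈ Set.Icc a c
  swap
  · push Not at hne
    simp [hne]
  obtain ⟨i₀, ha, hc⟩ := hne
  have hup' : #{i | l i + β ≤ c + β} + #{j | ν j + (β + γ) ≤ c + β} ≤ #{k | μ k ≤ c + β} := by
    have h := hup (c + β)
    rwa [card_filter_sum] at h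
  have hdn' : #{i | a - β ≤ l i + -β} + #{j | a - β ≤ ν j + -(β + γ)} ≤ #{k | a - β ≤ μ k} := by
    have h := hdn (a - β)
    rwa [card_filter_sum] at h
  -- predicates are written exactly as in `hup'` and `hdn'`, so that `omega` sees the same atoms
  have hl := card_filter_or_add_card_filter_and univ (a - β ≤ l · + -β) (l · + β ≤ c + β)
  have hν := card_filter_or_add_card_filter_and univ (a - β ≤ ν · + -(β + γ))
    (ν · + (β + γ) ≤ c + β)
  have hμ := card_filter_or_add_card_filter_and univ (a - β ≤ μ ·) (μ · ≤ c + β)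
  rw [filter_true_of_mem fun i _ => (le_or_gt a (l i)).imp (by intro; linarith)
    fun h => by linarith] at hl
  -- the gap at `l i₀ ∈ [a, c]` puts every `ν j` below `c - γ` or above `a + γ`
  rw [filter_true_of_mem fun j _ => ?_] at hν
  swap
  · by_contra! h
    have : |l i₀ - ν j| < γ := abs_sub_lt_iff.2 ⟨by linarith, by linarith⟩
    linarith [hgap i₀ j]
  have hcard := card_le_univ (filter (fun k => a - β ≤ μ k ∨ μ k ≤ c + β) univ)
  have hIcc : #{i | l i ∈ Set.Icc a c} = #{i | a - β ≤ l i + -β ∧ l i + β ≤ c + β} :=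
    congrArg card (filter_congr fun i _ => by simp [← sub_eq_add_neg])
  simp only [card_univ, Fintype.card_sum] at hl hν hcard
  rw [hIcc]
  simp only [Set.mem_Icc]
  omega

namespace ContinuousLinearMap

variable {𝕜 E : Type*} [RCLike 𝕜] [NormedAddCommGroup E] [InnerProductSpace 𝕜 E]

theorem abs_re_inner_apply_self_le (T : E →L[𝕜] E) (z : E) : |re ⟪T z, z⟫_𝕜| ≤ ‖T‖ * ‖z‖ ^ 2 := by
  calc |re ⟪T z, z⟫_𝕜| ≤ ‖T z‖ * ‖z‖ := (abs_re_le_norm _).trans (norm_inner_le_norm _ _)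
    _ ≤ ‖T‖ * ‖z‖ * ‖z‖ := by gcongr; exact T.le_opNorm _
    _ = ‖T‖ * ‖z‖ ^ 2 := by ring

theorem abs_re_inner_apply_add_le {T : E →L[𝕜] E} {a b : E} (ha : ⟪T a, a⟫_𝕜 = 0)
    (hb : ⟪T b, b⟫_𝕜 = 0) :
    |re ⟪T (a + b), a + b⟫_𝕜| ≤ 2 * ‖T‖ * ‖a‖ * ‖b‖ := by
  rw [map_add, inner_add_left, inner_add_right, inner_add_right, ha, hb, zero_add, add_zero]
  calc |re (⟪T a, b⟫_𝕜 + ⟪T b, a⟫_𝕜)| ≤ ‖⟪T a, b⟫_𝕜‖ + ‖⟪T b, a⟫_𝕜‖ :=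
        (abs_re_le_norm _).trans (norm_add_le _ _)
    _ ≤ ‖T a‖ * ‖b‖ + ‖T b‖ * ‖a‖ := add_le_add (norm_inner_le_norm _ _) (norm_inner_le_norm _ _)
    _ ≤ ‖T‖ * ‖a‖ * ‖b‖ + ‖T‖ * ‖b‖ * ‖a‖ := by gcongr <;> exact T.le_opNorm _
    _ = 2 * ‖T‖ * ‖a‖ * ‖b‖ := by ring

end ContinuousLinearMap

section BlockMatrices

variable {𝕜 m n : Type*} [RCLike 𝕜] [Fintype m] [Fintype n]

theorem EuclideanSpace.inner_toLp_sumElim (x x' : EuclideanSpace 𝕜 m) (y y' : EuclideanSpace 𝕜 n) :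
    ⟪toLp 2 (Sum.elim x y), toLp 2 (Sum.elim x' y')⟫_𝕜 = ⟪x, x'⟫_𝕜 + ⟪y, y'⟫_𝕜 := by
  simp only [Function.star_sumElim, sumElim_dotProduct_sumElim,
    EuclideanSpace.inner_eq_star_dotProduct]

theorem EuclideanSpace.norm_toLp_sumElim_sq (x : EuclideanSpace 𝕜 m) (y : EuclideanSpace 𝕜 n) :
    ‖toLp 2 (Sum.elim x y)‖ ^ 2 = ‖x‖ ^ 2 + ‖y‖ ^ 2 := by
  simp only [EuclideanSpace.norm_sq_eq, Fintype.sum_sum_type, Sum.elim_inl, Sum.elim_inr]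

variable [DecidableEq m] [DecidableEq n]

namespace Matrix

theorem toEuclideanCLM_fromBlocks_toLp_sumElim (A : Matrix m m 𝕜) (B : Matrix m n 𝕜)
    (C : Matrix n m 𝕜) (D : Matrix n n 𝕜) (x : EuclideanSpace 𝕜 m) (y : EuclideanSpace 𝕜 n) :
    toEuclideanCLM (𝕜 := 𝕜) (fromBlocks A B C D) (toLp 2 (Sum.elim x y)) =
      toLp 2 (Sum.elim (A *ᵥ x + B *ᵥ y) (C *ᵥ x + D *ᵥ y)) := by
  rw [toEuclideanCLM_toLp, fromBlocks_mulVec, Sum.elim_comp_inl, Sum.elim_comp_inr]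

theorem abs_re_inner_fromBlocks_zero_le (B : Matrix m n 𝕜) (C : Matrix n m 𝕜)
    (x : EuclideanSpace 𝕜 m) (y : EuclideanSpace 𝕜 n) :
    |re ⟪toEuclideanCLM (𝕜 := 𝕜) (fromBlocks 0 B C 0) (toLp 2 (Sum.elim x y)),
        toLp 2 (Sum.elim x y)⟫_𝕜| ≤ 2 * ‖fromBlocks 0 B C 0‖ * ‖x‖ * ‖y‖ := by
  have hsplit : (toLp 2 (Sum.elim x y) : EuclideanSpace 𝕜 (m ⊕ n)) =
      toLp 2 (Sum.elim x (0 : n → 𝕜)) + toLp 2 (Sum.elim (0 : m → 𝕜) y) := by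
    ext k; cases k <;> simp
  have hx : ‖(toLp 2 (Sum.elim x (0 : n → 𝕜)) : EuclideanSpace 𝕜 (m ⊕ n))‖ = ‖x‖ := by
    rw [← sq_eq_sq₀ (norm_nonneg _) (norm_nonneg _)]
    simpa using EuclideanSpace.norm_toLp_sumElim_sq x (0 : EuclideanSpace 𝕜 n)
  have hy : ‖(toLp 2 (Sum.elim (0 : m → 𝕜) y) : EuclideanSpace 𝕜 (m ⊕ n))‖ = ‖y‖ := by
    rw [← sq_eq_sq₀ (norm_nonneg _) (norm_nonneg _)]
    simpa using EuclideanSpace.norm_toLp_sumElim_sq (0 : EuclideanSpace 𝕜 m) y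
  rw [hsplit, ← hx, ← hy, ← l2_opNorm_toEuclideanCLM]
  refine ContinuousLinearMap.abs_re_inner_apply_add_le ?_ ?_ <;>
  · rw [toEuclideanCLM_fromBlocks_toLp_sumElim, EuclideanSpace.inner_toLp_sumElim]
    simp

theorem re_inner_toEuclideanCLM_fromBlocks_smul_one (c₁ c₂ : ℝ) (x : EuclideanSpace 𝕜 m)
    (y : EuclideanSpace 𝕜 n) :
    re ⟪toEuclideanCLM (𝕜 := 𝕜) (fromBlocks (c₁ • 1) 0 0 (c₂ • 1))
        (toLp 2 (Sum.elim x y)), toLp 2 (Sum.elim x y)⟫_𝕜 = c₁ * ‖x‖ ^ 2 + c₂ * ‖y‖ ^ 2 := by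
  rw [toEuclideanCLM_fromBlocks_toLp_sumElim, EuclideanSpace.inner_toLp_sumElim]
  simp only [smul_mulVec, one_mulVec, zero_mulVec, add_zero, zero_add, toLp_smul, toLp_ofLp,
    RCLike.real_smul_eq_coe_smul (K := 𝕜), inner_smul_left, conj_ofReal, map_add, re_ofReal_mul,
    inner_self_eq_norm_sq]

theorem abs_re_inner_fromBlocks_zero_add_le (B : Matrix m n 𝕜) (C : Matrix n m 𝕜)
    (Δ : Matrix (m ⊕ n) (m ⊕ n) 𝕜) {ρ γ : ℝ} (hρ : 0 ≤ ρ) (hγ : 0 ≤ γ)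
    (hB : ‖fromBlocks 0 B C 0‖ ^ 2 ≤ ρ * (ρ + γ)) (z : EuclideanSpace 𝕜 (m ⊕ n)) :
    |re ⟪toEuclideanCLM (𝕜 := 𝕜) (fromBlocks 0 B C 0 + Δ) z, z⟫_𝕜| ≤
      re ⟪toEuclideanCLM (𝕜 := 𝕜) (fromBlocks ((ρ + ‖Δ‖) • 1) 0 0
        ((ρ + ‖Δ‖ + γ) • 1)) z, z⟫_𝕜 := by
  obtain ⟨x, y, rfl⟩ : ∃ (x : EuclideanSpace 𝕜 m) (y : EuclideanSpace 𝕜 n),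
      z = toLp 2 (Sum.elim x y) :=
    ⟨toLp 2 fun i => z (.inl i), toLp 2 fun j => z (.inr j), by ext (i | j) <;> rfl⟩
  have hoff := abs_re_inner_fromBlocks_zero_le B C x y
  have hdiag := (toEuclideanCLM (𝕜 := 𝕜) Δ).abs_re_inner_apply_self_le (toLp 2 (Sum.elim x y))
  rw [l2_opNorm_toEuclideanCLM, EuclideanSpace.norm_toLp_sumElim_sq] at hdiag
  -- AM–GM: `2 ‖fromBlocks 0 B C 0‖ ‖x‖ ‖y‖ ≤ ρ ‖x‖² + (ρ + γ) ‖y‖²`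
  have hamgm := two_mul_mul_mul_le_of_sq_le (x := ‖x‖) (y := ‖y‖) hρ (by linarith) hB
  rw [re_inner_toEuclideanCLM_fromBlocks_smul_one, map_add, _root_.add_apply, inner_add_left,
    map_add]
  refine (abs_add_le _ _).trans ?_
  nlinarith

theorem IsHermitian.toEuclideanCLM_eigenvectorBasis {A : Matrix n n 𝕜}
    (hA : A.IsHermitian) (k : n) : toEuclideanCLM (𝕜 := 𝕜) A (hA.eigenvectorBasis k) =
      (hA.eigenvalues k : 𝕜) • hA.eigenvectorBasis k := by
  ext1
  rw [ofLp_toEuclideanCLM, hA.mulVec_eigenvectorBasis, ofLp_smul,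
    RCLike.real_smul_eq_coe_smul (K := 𝕜)]

theorem toEuclideanCLM_diagonal_basisFun (d : n → 𝕜) (i : n) :
    toEuclideanCLM (𝕜 := 𝕜) (diagonal d) (EuclideanSpace.basisFun n 𝕜 i) =
      d i • EuclideanSpace.basisFun n 𝕜 i := by
  ext j
  simp [Pi.single_apply]

theorem toEuclideanCLM_add_smul_one_apply {A : Matrix n n 𝕜} {v : EuclideanSpace 𝕜 n} {p : ℝ}
    (hv : toEuclideanCLM (𝕜 := 𝕜) A v = (p : 𝕜) • v) (c : ℝ) :
    toEuclideanCLM (𝕜 := 𝕜) (A + c • 1) v = ((p + c : ℝ) : 𝕜) • v := by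
  rw [RCLike.real_smul_eq_coe_smul (K := 𝕜), map_add, map_smul, map_one, _root_.add_apply, hv]
  simp [add_smul]

theorem exists_orthonormalBasis_toEuclideanCLM_fromBlocks_eq_smul {ι κ : Type*} [Fintype ι]
    [Fintype κ] (A : Matrix m m 𝕜) (D : Matrix n n 𝕜)
    (u : OrthonormalBasis ι 𝕜 (EuclideanSpace 𝕜 m)) {p : ι → ℝ}
    (hu : ∀ k, toEuclideanCLM (𝕜 := 𝕜) A (u k) = (p k : 𝕜) • u k)
    (w : OrthonormalBasis κ 𝕜 (EuclideanSpace 𝕜 n)) {q : κ → ℝ}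
    (hw : ∀ k, toEuclideanCLM (𝕜 := 𝕜) D (w k) = (q k : 𝕜) • w k) :
    ∃ b : OrthonormalBasis (ι ⊕ κ) 𝕜 (EuclideanSpace 𝕜 (m ⊕ n)), ∀ k,
      toEuclideanCLM (𝕜 := 𝕜) (fromBlocks A 0 0 D) (b k) = ((Sum.elim p q k : ℝ) : 𝕜) • b k := by
  set b := (u.prod w).map (PiLp.sumPiLpEquivProdLpPiLp 2 fun _ => 𝕜).symm
  have hb : ∀ k, b k = Sum.elim (fun i => toLp 2 (Sum.elim (u i) (0 : n → 𝕜)))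
      (fun j => toLp 2 (Sum.elim (0 : m → 𝕜) (w j))) k := by
    rintro (i | j) <;> ext (k | k) <;> simp [b]
  refine ⟨b, ?_⟩
  rintro (i | j)
  · have h := congrArg ofLp (hu i)
    rw [ofLp_toEuclideanCLM, ofLp_smul] at h
    rw [hb, Sum.elim_inl, toEuclideanCLM_fromBlocks_toLp_sumElim]
    ext (k | k) <;> simp [h]
  · have h := congrArg ofLp (hw j)
    rw [ofLp_toEuclideanCLM, ofLp_smul] at h
    rw [hb, Sum.elim_inr, toEuclideanCLM_fromBlocks_toLp_sumElim]
    ext (k | k) <;> simp [h]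

theorem exists_orthonormalBasis_toEuclideanCLM_fromBlocks_diagonal_add (l : m → ℝ)
    {N : Matrix n n 𝕜} (hN : N.IsHermitian) (c₁ c₂ : ℝ) :
    ∃ b : OrthonormalBasis (m ⊕ n) 𝕜 (EuclideanSpace 𝕜 (m ⊕ n)), ∀ k,
      toEuclideanCLM (𝕜 := 𝕜) (fromBlocks (diagonal fun i => (l i : 𝕜)) 0 0 N +
        fromBlocks (c₁ • 1) 0 0 (c₂ • 1)) (b k) =
        ((Sum.elim (fun i => l i + c₁) (fun j => hN.eigenvalues j + c₂) k : ℝ) : 𝕜) • b k := by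
  rw [fromBlocks_add, add_zero, zero_add]
  exact exists_orthonormalBasis_toEuclideanCLM_fromBlocks_eq_smul _ _
    (EuclideanSpace.basisFun m 𝕜)
    (fun i => toEuclideanCLM_add_smul_one_apply (toEuclideanCLM_diagonal_basisFun _ i) c₁)
    hN.eigenvectorBasis
    (fun j => toEuclideanCLM_add_smul_one_apply (hN.toEuclideanCLM_eigenvectorBasis j) c₂)

theorem re_inner_toEuclideanCLM_add_le_of_abs_le {Δ P : Matrix n n 𝕜}
    (h : ∀ z, |re ⟪toEuclideanCLM (𝕜 := 𝕜) Δ z, z⟫_𝕜| ≤ re ⟪toEuclideanCLM (𝕜 := 𝕜) P z, z⟫_𝕜)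
    (A : Matrix n n 𝕜) (z : EuclideanSpace 𝕜 n) :
    re ⟪toEuclideanCLM (𝕜 := 𝕜) (A + Δ) z, z⟫_𝕜 ≤ re ⟪toEuclideanCLM (𝕜 := 𝕜) (A + P) z, z⟫_𝕜 := by
  simp only [map_add, _root_.add_apply, inner_add_left]
  linarith [le_of_abs_le (h z)]

theorem re_inner_toEuclideanCLM_sub_le_of_abs_le {Δ P : Matrix n n 𝕜}
    (h : ∀ z, |re ⟪toEuclideanCLM (𝕜 := 𝕜) Δ z, z⟫_𝕜| ≤ re ⟪toEuclideanCLM (𝕜 := 𝕜) P z, z⟫_𝕜)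
    (A : Matrix n n 𝕜) (z : EuclideanSpace 𝕜 n) :
    re ⟪toEuclideanCLM (𝕜 := 𝕜) (A - P) z, z⟫_𝕜 ≤ re ⟪toEuclideanCLM (𝕜 := 𝕜) (A + Δ) z, z⟫_𝕜 := by
  simp only [map_add, map_sub, _root_.add_apply, _root_.sub_apply, inner_add_left, inner_sub_left]
  linarith [neg_le_of_abs_le (h z)]

end Matrix

end BlockMatrices

theorem stmt19_general (m r : ℕ) (l : Fin m → ℝ)
    (N : Matrix (Fin r) (Fin r) ℂ) (hN : N.IsHermitian)
    (B12 : Matrix (Fin m) (Fin r) ℂ)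
    (W Δoff Δdiag : Matrix (Fin m ⊕ Fin r) (Fin m ⊕ Fin r) ℂ)
    (hW : W = Matrix.fromBlocks
      (Matrix.diagonal (fun i => ((l i : ℝ) : ℂ))) 0 0 N)
    (hΔoff : Δoff = Matrix.fromBlocks 0 B12 B12ᴴ 0)
    (η Λnorm : ℝ) (hgapPos : 0 < η * Λnorm)
    (hgap : ∀ (i : Fin m) (j : Fin r), η * Λnorm ≤ |l i - hN.eigenvalues j|)
    (hS : (W + Δoff + Δdiag).IsHermitian) :
    ∃ g : Fin m → Fin m ⊕ Fin r, Function.Injective g ∧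
      ∀ j : Fin m,
        |l j - hS.eigenvalues (g j)| ≤
          min ‖Δoff‖ (‖Δoff‖ ^ 2 / (η * Λnorm)) + ‖Δdiag‖ := by
  set γ := η * Λnorm
  set β := min ‖Δoff‖ (‖Δoff‖ ^ 2 / γ) + ‖Δdiag‖
  set Sh : Matrix (Fin m ⊕ Fin r) (Fin m ⊕ Fin r) ℂ := fromBlocks (β • 1) 0 0 ((β + γ) • 1)
  have hSh z : |re ⟪toEuclideanCLM (𝕜 := ℂ) (Δoff + Δdiag) z, z⟫_ℂ| ≤
      re ⟪toEuclideanCLM (𝕜 := ℂ) Sh z, z⟫_ℂ := by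
    subst hΔoff
    exact abs_re_inner_fromBlocks_zero_add_le B12 B12ᴴ Δdiag
      (le_min (norm_nonneg _) (by positivity)) hgapPos.le
      (sq_le_min_mul_min_add (norm_nonneg _) hgapPos) z
  obtain ⟨bUp, hbUp⟩ :=
    exists_orthonormalBasis_toEuclideanCLM_fromBlocks_diagonal_add l hN β (β + γ)
  obtain ⟨bLo, hbLo⟩ :=
    exists_orthonormalBasis_toEuclideanCLM_fromBlocks_diagonal_add l hN (-β) (-(β + γ))
  have hneg : fromBlocks ((-β) • 1) 0 0 ((-(β + γ)) • 1) = -Sh := by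
    rw [fromBlocks_neg, neg_zero, neg_zero, neg_smul, neg_smul]
  rw [hneg, ← sub_eq_add_neg] at hbLo
  exact exists_injective_abs_sub_le_of_card_filter_Icc_le l hS.eigenvalues β
    (card_filter_Icc_le_of_card_filter_le l hN.eigenvalues hS.eigenvalues hgap
      (card_filter_le_le_of_re_inner_le
        (fun z => add_assoc W Δoff Δdiag ▸ re_inner_toEuclideanCLM_add_le_of_abs_le hSh W z)
        hS.eigenvectorBasis hS.toEuclideanCLM_eigenvectorBasis bUp (hW ▸ hbUp))
      (card_filter_ge_le_of_re_inner_le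
        (fun z => add_assoc W Δoff Δdiag ▸ re_inner_toEuclideanCLM_sub_le_of_abs_le hSh W z)
        bLo (hW ▸ hbLo) hS.eigenvectorBasis hS.toEuclideanCLM_eigenvectorBasis))

/-- Hermitian perturbation: with `W = blkdiag(Λ_m, N)`, a strictly
block-off-diagonal Hermitian `Δ_off`, a block-diagonal Hermitian `Δ_diag`, and
spectral gap `η‖Λ‖ > 0` between `eig(Λ_m)` and `eig(N)`, there are `m`
eigenvalues `λ̂_j` of `W + Δ_off + Δ_diag` with
`|λ_j − λ̂_j| ≤ min{‖Δ_off‖, ‖Δ_off‖²/(η‖Λ‖)} + ‖Δ_diag‖`. -/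
theorem stmt19 (m r : ℕ) (l : Fin m → ℝ)
    (N : Matrix (Fin r) (Fin r) ℂ) (hN : N.IsHermitian)
    (B12 : Matrix (Fin m) (Fin r) ℂ)
    (D11 : Matrix (Fin m) (Fin m) ℂ) (hD11 : D11.IsHermitian)
    (D22 : Matrix (Fin r) (Fin r) ℂ) (hD22 : D22.IsHermitian)
    (W Δoff Δdiag : Matrix (Fin m ⊕ Fin r) (Fin m ⊕ Fin r) ℂ)
    (hW : W = Matrix.fromBlocks
      (Matrix.diagonal (fun i => ((l i : ℝ) : ℂ))) 0 0 N)
    (hΔoff : Δoff = Matrix.fromBlocks 0 B12 B12ᴴ 0)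
    (hΔdiag : Δdiag = Matrix.fromBlocks D11 0 0 D22)
    (η Λnorm : ℝ) (hgapPos : 0 < η * Λnorm)
    (hgap : ∀ (i : Fin m) (j : Fin r), η * Λnorm ≤ |l i - hN.eigenvalues j|)
    (hS : (W + Δoff + Δdiag).IsHermitian) :
    ∃ g : Fin m → Fin m ⊕ Fin r, Function.Injective g ∧
      ∀ j : Fin m,
        |l j - hS.eigenvalues (g j)| ≤
          min ‖Δoff‖ (‖Δoff‖ ^ 2 / (η * Λnorm)) + ‖Δdiag‖ :=
  stmt19_general m r l N hN B12 W Δoff Δdiag hW hΔoff η Λnorm hgapPos hgap hS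
end
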